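/- For every integer k ≥ 2, the language L(A_k) over {a,b,c} recognized by the deterministic automaton A_k (with states α_j, β_j for 1 ≤ j ≤ k and a final sink f, where β_k is initial, final states are {β_k, α_k, f}, transitions β_k →a α_k, α_k →a α_k, β_j →b β_{j-1} for 2 ≤ j ≤ k, α_j →b α_{j-1} for 2 ≤ j ≤ k, β_1 →b f, α_1 →b f, α_1 →c β_k) is not (k−1)-block deterministic. -/

import Mathlib

namespace BD

/-- Language-level First: symbols beginning some word of `L`. -/
def LFirst {α : Type*} (L : Set (List α)) : Set α := {x | ∃ w, x :: w ∈ L}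

/-- Language-level Last. -/
def LLast {α : Type*} (L : Set (List α)) : Set α := {x | ∃ w, w ++ [x] ∈ L}

/-- Language-level Follow. -/
def LFollow {α : Type*} (L : Set (List α)) (x : α) : Set α :=
  {y | ∃ u v, u ++ x :: y :: v ∈ L}

/-- The list of symbol occurrences of a regular expression. -/
def rchars {α : Type*} : RegularExpression α → List α
  | .zero => []
  | .epsilon => []
  | .char a => [a]
  | .plus p q => rchars p ++ rchars q
  | .comp p q => rchars p ++ rchars q
  | .star p => rchars p

/-- The Glushkov automaton of a (marked) language `L` over positions `π`,
with labelling map `f` dropping the marks. States are `Option π`, `none` being initial. -/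
def glushkov {π β : Type*} (L : Set (List π)) (f : π → β) : NFA β (Option π) where
  step q b :=
    match q with
    | none => {s | ∃ y, y ∈ LFirst L ∧ f y = b ∧ s = some y}
    | some x => {s | ∃ y, y ∈ LFollow L x ∧ f y = b ∧ s = some y}
  start := {none}
  accept := {s | ∃ y, y ∈ LLast L ∧ s = some y} ∪ {s | s = none ∧ [] ∈ L}

/-- Determinism of an automaton. -/
def Det {β σ : Type*} (A : NFA β σ) : Prop :=
  (∃ i, A.start = {i}) ∧
  ∀ p b q₁ q₂, q₁ ∈ A.step p b → q₂ ∈ A.step p b → q₁ = q₂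

/-- `k`-lookahead determinism of an automaton. -/
def kLA {β σ : Type*} (A : NFA β σ) (k : ℕ) : Prop :=
  (∃ i, A.start = {i}) ∧
  ∀ p b q₁ q₂, q₁ ∈ A.step p b → q₂ ∈ A.step p b → q₁ ≠ q₂ →
    ∀ w : List β, w.length = k - 1 → A.evalFrom {q₁} w = ∅ ∨ A.evalFrom {q₂} w = ∅

/-- `k`-block determinism of a block automaton (labels are nonempty words of length ≤ k,
single initial state, no outgoing label a prefix of another outgoing label). -/
def kBD {γ σ : Type*} (A : NFA (List γ) σ) (k : ℕ) : Prop :=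
  (∃ i, A.start = {i}) ∧
  (∀ q b, (A.step q b).Nonempty → 1 ≤ b.length ∧ b.length ≤ k) ∧
  (∀ p b₁ b₂ q₁ q₂, q₁ ∈ A.step p b₁ → q₂ ∈ A.step p b₂ →
      (b₁, q₁) ≠ (b₂, q₂) → ¬ b₁ <+: b₂)

/-- A language over `γ` is `k`-block deterministic if it is specified by a block
regular expression (given by its marked version `E` over positions `π` together with
the dropping map `f` to blocks) whose Glushkov automaton is `k`-block deterministic. -/
def IsKBlockDet {γ : Type} (L : Set (List γ)) (k : ℕ) : Prop :=
  ∃ (π : Type) (E : RegularExpression π) (f : π → List γ),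
    (rchars E).Nodup ∧
    kBD (glushkov E.matches' f) k ∧
    L = {w | ∃ ws ∈ E.matches', (ws.map f).flatten = w}

/-- A language is `k`-lookahead deterministic if specified by a regular expression
whose Glushkov automaton is `k`-lookahead deterministic. -/
def IsKLookaheadDet {γ : Type} (L : Set (List γ)) (k : ℕ) : Prop :=
  ∃ (π : Type) (E : RegularExpression π) (f : π → γ),
    (rchars E).Nodup ∧
    kLA (glushkov E.matches' f) k ∧
    L = {w | ∃ ws ∈ E.matches', ws.map f = w}

/-- A language is one-unambiguous if specified by a regular expression with
deterministic Glushkov automaton. -/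
def IsOneUnambiguous {γ : Type} (L : Set (List γ)) : Prop :=
  ∃ (π : Type) (E : RegularExpression π) (f : π → γ),
    (rchars E).Nodup ∧
    Det (glushkov E.matches' f) ∧
    L = {w | ∃ ws ∈ E.matches', ws.map f = w}

/-- Reachability in an automaton. -/
def Reach {β σ : Type*} (A : NFA β σ) (p q : σ) : Prop := ∃ w, q ∈ A.evalFrom {p} w

/-- `O` is an orbit (strongly connected component) of `A`. -/
def IsOrbit {β σ : Type*} (A : NFA β σ) (O : Set σ) : Prop :=
  ∃ q, O = {p | Reach A p q ∧ Reach A q p}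

/-- A non-trivial orbit: one containing a cycle. -/
def NonTrivial {β σ : Type*} (A : NFA β σ) (O : Set σ) : Prop :=
  ∃ p ∈ O, ∃ w : List β, w ≠ [] ∧ p ∈ A.evalFrom {p} w

/-- In-gate of an orbit. -/
def InGate {β σ : Type*} (A : NFA β σ) (O : Set σ) (q : σ) : Prop :=
  q ∈ O ∧ (q ∈ A.start ∨ ∃ p ∉ O, ∃ b, q ∈ A.step p b)

/-- Out-gate of an orbit. -/
def OutGate {β σ : Type*} (A : NFA β σ) (O : Set σ) (q : σ) : Prop :=
  q ∈ O ∧ (q ∈ A.accept ∨ ∃ p ∉ O, ∃ b, p ∈ A.step q b)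

end BD

namespace BD

inductive ABC : Type | a | b | c
deriving DecidableEq

open ABC Sum in
/-- The deterministic automaton `A_k`: states `inl (false, j)` is `β_j`,
`inl (true, j)` is `α_j` (for `1 ≤ j ≤ k`), `inr ()` is the final sink `f`. -/
def A2 (k : ℕ) : NFA ABC ((Bool × ℕ) ⊕ Unit) where
  step q x :=
    match q, x with
    | inl (false, j), a => if j = k then {inl (true, k)} else ∅
    | inl (true, j), a => if j = k then {inl (true, k)} else ∅
    | inl (bl, j), b =>
        if 2 ≤ j ∧ j ≤ k then {inl (bl, j - 1)}
        else if j = 1 then {inr ()} else ∅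
    | inl (true, j), c => if j = 1 then {inl (false, k)} else ∅
    | _, _ => ∅
  start := {inl (false, k)}
  accept := {inl (false, k), inl (true, k), inr ()}

/- list helpers -/

lemma split_single {α : Type*} {w r u v : List α} {x : α} (h : w ++ r = u ++ x :: v) :
    (∃ v₁, w = u ++ x :: v₁ ∧ v = v₁ ++ r) ∨ (∃ u₂, u = w ++ u₂ ∧ r = u₂ ++ x :: v) := by
  rcases List.append_eq_append_iff.mp h with ⟨a', ha1, ha2⟩ | ⟨c', hc1, hc2⟩
  · exact Or.inr ⟨a', ha1, ha2⟩
  · cases c' with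
    | nil => exact Or.inr ⟨[], by simpa using hc1.symm, by simpa using hc2.symm⟩
    | cons x' c'' =>
      obtain ⟨rfl, rfl⟩ : x = x' ∧ v = c'' ++ r := by
        have := hc2; simp only [List.cons_append] at this
        exact ⟨(List.cons.injEq _ _ _ _ ▸ this).1, (List.cons.injEq _ _ _ _ ▸ this).2⟩
      exact Or.inl ⟨c'', hc1, rfl⟩

lemma flatten_split {α : Type*} :
    ∀ {S : List (List α)} {u v : List α} {x : α}, S.flatten = u ++ x :: v →
    ∃ SL w₁ u₁ v₁ SR, S = SL ++ w₁ :: SR ∧ w₁ = u₁ ++ x :: v₁ ∧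
      u = SL.flatten ++ u₁ ∧ v = v₁ ++ SR.flatten := by
  intro S
  induction S with
  | nil => intro u v x h; exact absurd h (by simp)
  | cons w S ih =>
    intro u v x h
    rw [List.flatten_cons] at h
    rcases split_single h with ⟨v₁, hw, hv⟩ | ⟨u₂, hu, hr⟩
    · exact ⟨[], w, u, v₁, S, by simp, hw, by simp, hv⟩
    · obtain ⟨SL, w₁, u₁, v₁, SR, h1, h2, h3, h4⟩ := ih hr
      exact ⟨w :: SL, w₁, u₁, v₁, SR, by simp [h1], h2, by simp [hu, h3], h4⟩

lemma flatten_last {α : Type*} {S : List (List α)} {u : List α} {x : α}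
    (h : S.flatten = u ++ [x]) : ∃ w u₁, w ∈ S ∧ w = u₁ ++ [x] := by
  obtain ⟨SL, w₁, u₁, v₁, SR, h1, h2, h3, h4⟩ := flatten_split h
  have hv : v₁ = [] := by
    rcases List.append_eq_nil_iff.mp h4.symm with ⟨h5, _⟩; exact h5
  exact ⟨w₁, u₁, by simp [h1], by simp [h2, hv]⟩

lemma flatten_head {α : Type*} {S : List (List α)} {v : List α} {x : α}
    (h : S.flatten = x :: v) : ∃ w v₁, w ∈ S ∧ w = x :: v₁ := by
  have h' : S.flatten = [] ++ x :: v := by simpa using h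
  obtain ⟨SL, w₁, u₁, v₁, SR, h1, h2, h3, h4⟩ := flatten_split h'
  have hu : u₁ = [] := by
    rcases List.append_eq_nil_iff.mp h3.symm with ⟨_, h5⟩; exact h5
  exact ⟨w₁, v₁, by simp [h1], by simp [h2, hu]⟩

/- chars of matches -/

lemma mem_rchars {π : Type*} :
    ∀ (E : RegularExpression π) (ws : List π), ws ∈ E.matches' → ∀ x ∈ ws, x ∈ rchars E := by
  intro E
  induction E with
  | zero => intro ws h; exact absurd h (Language.notMem_zero ws)
  | epsilon =>
    intro ws h
    have h' : ws = [] := by simpa [RegularExpression.matches'] using h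
    subst h'; intro x hx; simp at hx
  | char a =>
    intro ws h x hx
    have : ws = [a] := h
    subst this; simp at hx; simp [rchars, hx]
  | plus P Q ihP ihQ =>
    intro ws h x hx
    rcases (Language.mem_add _ _ _).mp h with h' | h'
    · exact List.mem_append.mpr (Or.inl (ihP ws h' x hx))
    · exact List.mem_append.mpr (Or.inr (ihQ ws h' x hx))
  | comp P Q ihP ihQ =>
    intro ws h x hx
    rcases Language.mem_mul.mp h with ⟨a, ha, b, hb, rfl⟩
    rcases List.mem_append.mp hx with h' | h'
    · exact List.mem_append.mpr (Or.inl (ihP a ha x h'))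
    · exact List.mem_append.mpr (Or.inr (ihQ b hb x h'))
  | star P ihP =>
    intro ws h x hx
    rcases Language.mem_kstar.mp h with ⟨S, rfl, hS⟩
    rcases List.mem_flatten.mp hx with ⟨w, hw, hxw⟩
    exact ihP w (hS w hw) x hxw



lemma crossover {π : Type*} :
    ∀ (E : RegularExpression π), (rchars E).Nodup →
    ∀ (u : List π) (x : π) (v u' v' : List π),
      u ++ x :: v ∈ E.matches' → u' ++ x :: v' ∈ E.matches' → u ++ x :: v' ∈ E.matches' := by
  intro E
  induction E with
  | zero => intro _ u x v u' v' h; exact absurd h (Language.notMem_zero _)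
  | epsilon =>
    intro _ u x v u' v' h _
    have h1 : u ++ x :: v = [] := by simpa [RegularExpression.matches'] using h
    simp at h1
  | char a =>
    intro _ u x v u' v' h h'
    have h1 : u ++ x :: v = [a] := h
    have h2 : u' ++ x :: v' = [a] := h'
    have hu : u = [] ∧ x = a ∧ v = [] := by
      cases u with
      | nil => simp at h1; exact ⟨rfl, h1.1, h1.2⟩
      | cons b t => simp at h1
    have hv' : v' = [] := by
      cases u' with
      | nil => simp at h2; exact h2.2
      | cons b t => simp at h2
    obtain ⟨rfl, rfl, rfl⟩ := hu; subst hv'; exact h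
  | plus P Q ihP ihQ =>
    intro hN u x v u' v' h h'
    rw [rchars, List.nodup_append'] at hN
    obtain ⟨nP, nQ, disj⟩ := hN
    rcases (Language.mem_add _ _ _).mp h with h1 | h1 <;>
      rcases (Language.mem_add _ _ _).mp h' with h2 | h2
    · exact (Language.mem_add _ _ _).mpr (Or.inl (ihP nP u x v u' v' h1 h2))
    · exact absurd (mem_rchars Q _ h2 x (by simp))
        (fun hq => disj (mem_rchars P _ h1 x (by simp)) hq)
    · exact absurd (mem_rchars P _ h2 x (by simp))
        (fun hp => disj hp (mem_rchars Q _ h1 x (by simp)))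
    · exact (Language.mem_add _ _ _).mpr (Or.inr (ihQ nQ u x v u' v' h1 h2))
  | comp P Q ihP ihQ =>
    intro hN u x v u' v' h h'
    rw [rchars, List.nodup_append'] at hN
    obtain ⟨nP, nQ, disj⟩ := hN
    rcases Language.mem_mul.mp h with ⟨wp, hwp, wq, hwq, heq⟩
    rcases Language.mem_mul.mp h' with ⟨wp', hwp', wq', hwq', heq'⟩
    rcases split_single heq with ⟨v₁, hw, hv⟩ | ⟨u₂, hu, hr⟩
    · -- x in wp
      have hxP : x ∈ rchars P := mem_rchars P _ hwp x (by rw [hw]; simp)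
      rcases split_single heq' with ⟨v₁', hw', hv'⟩ | ⟨u₂', hu', hr'⟩
      · -- x in wp'
        have hmix : u ++ x :: v₁' ∈ P.matches' := by
          apply ihP nP u x v₁ u' v₁' (hw ▸ hwp) (hw' ▸ hwp')
        have : (u ++ x :: v₁') ++ wq' ∈ P.matches' * Q.matches' :=
          Language.append_mem_mul hmix hwq'
        simpa [hv'] using this
      · exact absurd (mem_rchars Q _ hwq' x (by rw [hr']; simp)) (fun hq => disj hxP hq)
    · -- x in wq
      have hxQ : x ∈ rchars Q := mem_rchars Q _ hwq x (by rw [hr]; simp)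
      rcases split_single heq' with ⟨v₁', hw', hv'⟩ | ⟨u₂', hu', hr'⟩
      · exact absurd (mem_rchars P _ hwp' x (by rw [hw']; simp)) (fun hp => disj hp hxQ)
      · have hmix : u₂ ++ x :: v' ∈ Q.matches' := by
          apply ihQ nQ u₂ x v u₂' v' (hr ▸ hwq) (hr' ▸ hwq')
        have : wp ++ (u₂ ++ x :: v') ∈ P.matches' * Q.matches' :=
          Language.append_mem_mul hwp hmix
        simpa [hu, List.append_assoc] using this
  | star P ihP =>
    intro hN u x v u' v' h h'
    have nP : (rchars P).Nodup := hN
    rcases Language.mem_kstar.mp h with ⟨S, hflat, hS⟩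
    rcases Language.mem_kstar.mp h' with ⟨S', hflat', hS'⟩
    obtain ⟨SL, w₁, u₁, v₁, SR, hS1, hw1, hu1, hv1⟩ := flatten_split hflat.symm
    obtain ⟨SL', w₁', u₁', v₁', SR', hS1', hw1', hu1', hv1'⟩ := flatten_split hflat'.symm
    have hw1P : w₁ ∈ P.matches' := hS w₁ (by rw [hS1]; simp)
    have hw1P' : w₁' ∈ P.matches' := hS' w₁' (by rw [hS1']; simp)
    have hmix : u₁ ++ x :: v₁' ∈ P.matches' :=
      ihP nP u₁ x v₁ u₁' v₁' (hw1 ▸ hw1P) (hw1' ▸ hw1P')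
    have hmem : (SL ++ (u₁ ++ x :: v₁') :: SR').flatten ∈ P.star.matches' := by
      show _ ∈ KStar.kstar _
      apply Language.join_mem_kstar
      intro y hy
      rcases List.mem_append.mp hy with h1 | h1
      · exact hS y (by rw [hS1]; simp [h1])
      · rcases List.mem_cons.mp h1 with rfl | h2
        · exact hmix
        · exact hS' y (by rw [hS1']; simp [h2])
    have : (SL ++ (u₁ ++ x :: v₁') :: SR').flatten = u ++ x :: v' := by
      rw [List.flatten_append, List.flatten_cons, hu1, hv1']
      simp [List.append_assoc]
    rw [← this]; exact hmem



variable {π : Type*}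

/-- single Follow step -/
def FStep (M : Set (List π)) (p q : π) : Prop := q ∈ LFollow M p

/-- reachability by Follow steps -/
def CReach (M : Set (List π)) : π → π → Prop := Relation.ReflTransGen (FStep M)

lemma aux_loc (E : RegularExpression π) (hN : (rchars E).Nodup) :
    ∀ (l : List π) (hne : l ≠ []), l.head hne ∈ LFirst E.matches' →
    l.Chain' (FStep E.matches') → ∃ s, l ++ s ∈ E.matches' := by
  intro l
  induction l using List.reverseRecOn with
  | nil => intro hne; exact absurd rfl hne
  | append_singleton l₀ q ih =>
    intro hne hfirst hchain
    rcases eq_or_ne l₀ [] with rfl | hl₀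
    · simp only [List.nil_append] at hfirst ⊢
      obtain ⟨w, hw⟩ := hfirst
      exact ⟨w, hw⟩
    · have hch₀ : l₀.Chain' (FStep E.matches') := hchain.prefix ⟨[q], rfl⟩
      have hhead : l₀.head hl₀ ∈ LFirst E.matches' := by
        rwa [List.head_append_left hl₀] at hfirst
      obtain ⟨s, hs⟩ := ih hl₀ hhead hch₀
      set gl := l₀.getLast hl₀ with hgl
      have hstep : FStep E.matches' gl q := by
        rcases List.isChain_append.mp hchain with ⟨_, _, hrel⟩
        have h5 : gl ∈ l₀.getLast? := by
          rw [List.getLast?_eq_getLast_of_ne_nil hl₀]; rfl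
        exact hrel gl h5 q rfl
      obtain ⟨u', v', huv⟩ := hstep
      have hdl : l₀.dropLast ++ [gl] = l₀ := List.dropLast_append_getLast hl₀
      have hw1 : l₀.dropLast ++ gl :: s ∈ E.matches' := by
        have : l₀.dropLast ++ gl :: s = l₀ ++ s := by rw [← hdl]; simp
        rw [this]; exact hs
      have hcross := crossover E hN _ gl _ u' (q :: v') hw1 huv
      refine ⟨v', ?_⟩
      have : l₀.dropLast ++ gl :: q :: v' = (l₀ ++ [q]) ++ v' := by rw [← hdl]; simp
      rwa [this] at hcross

lemma locality (E : RegularExpression π) (hN : (rchars E).Nodup) (l : List π) (hne : l ≠ [])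
    (h1 : l.head hne ∈ LFirst E.matches') (h2 : l.Chain' (FStep E.matches'))
    (h3 : l.getLast hne ∈ LLast E.matches') : l ∈ E.matches' := by
  obtain ⟨s, hs⟩ := aux_loc E hN l hne h1 h2
  obtain ⟨u', hu'⟩ := h3
  set gl := l.getLast hne with hgl
  have hdl : l.dropLast ++ [gl] = l := List.dropLast_append_getLast hne
  have hw1 : l.dropLast ++ gl :: s ∈ E.matches' := by
    have : l.dropLast ++ gl :: s = l ++ s := by rw [← hdl]; simp
    rw [this]; exact hs
  have hcross := crossover E hN l.dropLast gl s u' [] hw1 hu'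
  rwa [show l.dropLast ++ gl :: [] = l from hdl] at hcross

lemma creach_chain {M : Set (List π)} {x z : π} (h : CReach M x z) :
    ∃ l, List.Chain (FStep M) x l ∧ (x :: l).getLast (by simp) = z := by
  induction h using Relation.ReflTransGen.head_induction_on with
  | refl => exact ⟨[], List.Chain.nil, rfl⟩
  | head hstep _ ih =>
    obtain ⟨l, hc, hl⟩ := ih
    refine ⟨_ :: l, List.chain_cons.mpr ⟨hstep, hc⟩, ?_⟩
    rw [List.getLast_cons (by simp)]
    exact hl

lemma word_reach {M : Set (List π)} :
    ∀ (v u : List π) (q : π) (w : List π), u ++ q :: (v ++ w) ∈ M →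
      CReach M q ((q :: v).getLast (by simp)) := by
  intro v
  induction v with
  | nil => intro u q w _; simpa [CReach] using Relation.ReflTransGen.refl
  | cons q' v' ih =>
    intro u q w hmem
    have hstep : FStep M q q' := ⟨u, v' ++ w, by simpa using hmem⟩
    have hrec : CReach M q' ((q' :: v').getLast (by simp)) := by
      apply ih (u ++ [q]) q' w
      simpa using hmem
    have : ((q :: q' :: v').getLast (by simp)) = ((q' :: v').getLast (by simp)) :=
      List.getLast_cons (by simp)
    rw [this]
    exact Relation.ReflTransGen.head hstep hrec

lemma mword_chain' {M : Set (List π)} :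
    ∀ (v u : List π), u ++ v ∈ M → v.Chain' (FStep M) := by
  intro v
  induction v with
  | nil => intro u _; exact List.isChain_nil
  | cons q v' ih =>
    intro u hmem
    rw [show List.Chain' (FStep M) (q :: v') = List.IsChain (FStep M) (q :: v') from rfl, List.isChain_cons]
    constructor
    · intro y hy
      cases v' with
      | nil => simp at hy
      | cons q' v'' =>
        simp at hy; subst hy
        exact ⟨u, v'', by simpa using hmem⟩
    · exact ih (u ++ [q]) (by simpa using hmem)



lemma star_single {π : Type*} {P : RegularExpression π} {w : List π} (h : w ∈ P.matches') :
    w ∈ P.star.matches' := by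
  have : [w].flatten ∈ KStar.kstar P.matches' := Language.join_mem_kstar (by simpa using h)
  simpa using this

lemma star_double {π : Type*} {P : RegularExpression π} {w₁ w₂ : List π} (h1 : w₁ ∈ P.matches')
    (h2 : w₂ ∈ P.matches') : w₁ ++ w₂ ∈ P.star.matches' := by
  have : [w₁, w₂].flatten ∈ KStar.kstar P.matches' := Language.join_mem_kstar (by
    intro y hy
    simp only [List.mem_cons, List.not_mem_nil, or_false] at hy
    rcases hy with rfl | rfl
    · exact h1
    · exact h2)
  simpa using this



lemma getLast_eq_of_eq {α : Type*} {l₁ l₂ : List α} (h : l₁ = l₂) {h₁ : l₁ ≠ []} :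
    l₁.getLast h₁ = l₂.getLast (h ▸ h₁) := by subst h; rfl

lemma creach_mono {M₁ M₂ : Set (List π)} (h : ∀ a b, FStep M₁ a b → FStep M₂ a b)
    {x z : π} (hr : CReach M₁ x z) : CReach M₂ x z :=
  Relation.ReflTransGen.mono h _ _ hr

theorem star_lem :
    ∀ (E : RegularExpression π), (rchars E).Nodup →
    ∀ x z y, z ∈ LLast E.matches' → CReach E.matches' x z → CReach E.matches' z x →
      y ∈ LFollow E.matches' x → ¬ CReach E.matches' y z → x ∈ LLast E.matches' := by
  intro E
  induction E with
  | zero => intro _ x z y hz; obtain ⟨w, hw⟩ := hz; exact absurd hw (Language.notMem_zero _)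
  | epsilon =>
    intro _ x z y hz
    obtain ⟨w, hw⟩ := hz
    have h1 : w ++ [z] ∈ (1 : Language π) := hw
    rw [Language.mem_one] at h1
    simp at h1
  | char a =>
    intro _ x z y _ _ _ hy
    obtain ⟨u, v, huv⟩ := hy
    have : u ++ x :: y :: v = [a] := huv
    exfalso
    rcases u with _ | ⟨b, u⟩ <;> simp at this
  | plus P Q ihP ihQ =>
    intro hN x z y hz hxz hzx hy hnyz
    rw [rchars, List.nodup_append'] at hN
    obtain ⟨nP, nQ, disj⟩ := hN
    have fplus : ∀ q q', FStep (P.plus Q).matches' q q' ↔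
        (FStep P.matches' q q' ∨ FStep Q.matches' q q') := by
      intro q q'
      constructor
      · rintro ⟨u, v, huv⟩
        rcases (Language.mem_add _ _ _).mp huv with h | h
        · exact Or.inl ⟨u, v, h⟩
        · exact Or.inr ⟨u, v, h⟩
      · rintro (⟨u, v, huv⟩ | ⟨u, v, huv⟩)
        · exact ⟨u, v, (Language.mem_add _ _ _).mpr (Or.inl huv)⟩
        · exact ⟨u, v, (Language.mem_add _ _ _).mpr (Or.inr huv)⟩
    have hPside : ∀ q q', FStep P.matches' q q' → q ∈ rchars P ∧ q' ∈ rchars P := by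
      rintro q q' ⟨u, v, huv⟩
      exact ⟨mem_rchars P _ huv q (by simp), mem_rchars P _ huv q' (by simp)⟩
    have hQside : ∀ q q', FStep Q.matches' q q' → q ∈ rchars Q ∧ q' ∈ rchars Q := by
      rintro q q' ⟨u, v, huv⟩
      exact ⟨mem_rchars Q _ huv q (by simp), mem_rchars Q _ huv q' (by simp)⟩
    have hstayP : ∀ q q', CReach (P.plus Q).matches' q q' → q ∈ rchars P →
        CReach P.matches' q q' ∧ q' ∈ rchars P := by
      intro q q' hreach
      induction hreach using Relation.ReflTransGen.head_induction_on with
      | refl => intro hq; exact ⟨Relation.ReflTransGen.refl, hq⟩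
      | head hstep _ ih =>
        intro hq
        rcases (fplus _ _).mp hstep with hs | hs
        · obtain ⟨hr, hzc⟩ := ih (hPside _ _ hs).2
          exact ⟨Relation.ReflTransGen.head hs hr, hzc⟩
        · exact absurd ((hQside _ _ hs).1) (fun hh => disj hq hh)
    have hstayQ : ∀ q q', CReach (P.plus Q).matches' q q' → q ∈ rchars Q →
        CReach Q.matches' q q' ∧ q' ∈ rchars Q := by
      intro q q' hreach
      induction hreach using Relation.ReflTransGen.head_induction_on with
      | refl => intro hq; exact ⟨Relation.ReflTransGen.refl, hq⟩
      | head hstep _ ih =>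
        intro hq
        rcases (fplus _ _).mp hstep with hs | hs
        · exact absurd ((hPside _ _ hs).1) (fun hh => disj hh hq)
        · obtain ⟨hr, hzc⟩ := ih (hQside _ _ hs).2
          exact ⟨Relation.ReflTransGen.head hs hr, hzc⟩
    obtain ⟨u, v, huv⟩ := hy
    rcases (Language.mem_add _ _ _).mp huv with hside | hside
    · have hxP : x ∈ rchars P := mem_rchars P _ hside x (by simp)
      obtain ⟨hxzP, hzP⟩ := hstayP x z hxz hxP
      have hzxP : CReach P.matches' z x := (hstayP z x hzx hzP).1
      have hzlP : z ∈ LLast P.matches' := by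
        obtain ⟨w, hw⟩ := hz
        rcases (Language.mem_add _ _ _).mp hw with h | h
        · exact ⟨w, h⟩
        · exact absurd (mem_rchars Q _ h z (by simp)) (fun hh => disj hzP hh)
      have hnP : ¬ CReach P.matches' y z := fun h =>
        hnyz (creach_mono (fun a b hs => (fplus a b).mpr (Or.inl hs)) h)
      obtain ⟨w, hw⟩ := ihP nP x z y hzlP hxzP hzxP ⟨u, v, hside⟩ hnP
      exact ⟨w, (Language.mem_add _ _ _).mpr (Or.inl hw)⟩
    · have hxQ : x ∈ rchars Q := mem_rchars Q _ hside x (by simp)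
      obtain ⟨hxzQ, hzQ⟩ := hstayQ x z hxz hxQ
      have hzxQ : CReach Q.matches' z x := (hstayQ z x hzx hzQ).1
      have hzlQ : z ∈ LLast Q.matches' := by
        obtain ⟨w, hw⟩ := hz
        rcases (Language.mem_add _ _ _).mp hw with h | h
        · exact absurd (mem_rchars P _ h z (by simp)) (fun hh => disj hh hzQ)
        · exact ⟨w, h⟩
      have hnQ : ¬ CReach Q.matches' y z := fun h =>
        hnyz (creach_mono (fun a b hs => (fplus a b).mpr (Or.inr hs)) h)
      obtain ⟨w, hw⟩ := ihQ nQ x z y hzlQ hxzQ hzxQ ⟨u, v, hside⟩ hnQ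
      exact ⟨w, (Language.mem_add _ _ _).mpr (Or.inr hw)⟩
  | comp P Q ihP ihQ =>
    intro hN x z y hz hxz hzx hy hnyz
    rw [rchars, List.nodup_append'] at hN
    obtain ⟨nP, nQ, disj⟩ := hN
    -- a word of M exists
    obtain ⟨wz, hwz⟩ := id hz
    obtain ⟨wp₀, hwp₀, wq₀, hwq₀, _⟩ := Language.mem_mul.mp hwz
    -- follow analysis
    have fcomp : ∀ q q', FStep (P.comp Q).matches' q q' →
        (FStep P.matches' q q' ∧ q ∈ rchars P) ∨
        (FStep Q.matches' q q' ∧ q ∈ rchars Q) ∨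
        (q ∈ LLast P.matches' ∧ q' ∈ LFirst Q.matches' ∧ q ∈ rchars P ∧ q' ∈ rchars Q) := by
      rintro q q' ⟨u, v, huv⟩
      obtain ⟨wp, hwp, wq, hwq, heq⟩ := Language.mem_mul.mp huv
      rcases split_single heq with ⟨v₁, hw, hv⟩ | ⟨u₂, hu, hr⟩
      · -- q inside wp
        cases v₁ with
        | nil =>
          -- q is last of wp, q' heads wq
          have hq':  wq = q' :: v := by simpa using hv.symm
          refine Or.inr (Or.inr ⟨⟨u, hw ▸ hwp⟩, ⟨v, hq' ▸ hwq⟩, ?_, ?_⟩)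
          · exact mem_rchars P _ hwp q (by rw [hw]; simp)
          · exact mem_rchars Q _ hwq q' (by rw [hq']; simp)
        | cons b v₂ =>
          have hb : b = q' := by
            have := hv; simp only [List.cons_append] at this
            exact ((List.cons.injEq _ _ _ _ ▸ this).1).symm
          subst hb
          refine Or.inl ⟨⟨u, v₂, hw ▸ hwp⟩, mem_rchars P _ hwp q (by rw [hw]; simp)⟩
      · -- q inside wq
        refine Or.inr (Or.inl ⟨⟨u₂, v, hr ▸ hwq⟩, mem_rchars Q _ hwq q (by rw [hr]; simp)⟩)
    have hQstay : ∀ q q', CReach (P.comp Q).matches' q q' → q ∈ rchars Q →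
        CReach Q.matches' q q' ∧ q' ∈ rchars Q := by
      intro q q' hreach
      induction hreach using Relation.ReflTransGen.head_induction_on with
      | refl => intro hq; exact ⟨Relation.ReflTransGen.refl, hq⟩
      | head hstep _ ih =>
        intro hq
        rcases fcomp _ _ hstep with ⟨_, hc⟩ | ⟨hs, _⟩ | ⟨_, _, hc, _⟩
        · exact absurd hc (fun hh => disj hh hq)
        · obtain ⟨hr, hzc⟩ := ih (by
            obtain ⟨u, v, huv⟩ := hs
            exact mem_rchars Q _ huv _ (by simp))
          exact ⟨Relation.ReflTransGen.head hs hr, hzc⟩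
        · exact absurd hc (fun hh => disj hh hq)
    have hPstay : ∀ q q', CReach (P.comp Q).matches' q q' → q ∈ rchars P → q' ∈ rchars P →
        CReach P.matches' q q' := by
      intro q q' hreach
      induction hreach using Relation.ReflTransGen.head_induction_on with
      | refl => intro _ _; exact Relation.ReflTransGen.refl
      | head hstep hrest ih =>
        intro hq hq'
        rcases fcomp _ _ hstep with ⟨hs, _⟩ | ⟨_, hc⟩ | ⟨_, _, _, hcq⟩
        · refine Relation.ReflTransGen.head hs (ih (by
            obtain ⟨u, v, huv⟩ := hs
            exact mem_rchars P _ huv _ (by simp)) hq')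
        · exact absurd hc (fun hh => disj hq hh)
        · -- crossed into Q; then q' would be in Q
          exact absurd ((hQstay _ _ hrest hcq).2) (fun hh => disj hq' hh)
    obtain ⟨u, v, huv⟩ := hy
    obtain ⟨wp, hwp, wq, hwq, heq⟩ := Language.mem_mul.mp huv
    rcases split_single heq with ⟨v₁, hw, hv⟩ | ⟨u₂, hu, hr⟩
    · -- x inside wp
      have hxP : x ∈ rchars P := mem_rchars P _ hwp x (by rw [hw]; simp)
      -- z must be in rchars P
      have hzP : z ∈ rchars P := by
        rcases Relation.ReflTransGen.cases_head hzx with heq' | ⟨c, hstep, _⟩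
        · exact heq' ▸ hxP
        · -- use: if z ∈ rchars Q then x ∈ rchars Q
          by_contra hzq
          -- z has a follow step; figure out side
          rcases fcomp _ _ hstep with ⟨hs, hc⟩ | ⟨hs, hc⟩ | ⟨_, _, hc, _⟩
          · exact hzq hc
          · exact absurd ((hQstay z x hzx hc).2) (fun hh => disj hxP hh)
          · exact hzq hc
      have hzlast : z ∈ LLast P.matches' ∧ [] ∈ Q.matches' := by
        obtain ⟨w, hw'⟩ := id hz
        obtain ⟨wp', hwp', wq', hwq', heq'⟩ := Language.mem_mul.mp hw'
        rcases split_single heq' with ⟨v₁', hw1, hv1⟩ | ⟨u₂', hu1, hr1⟩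
        · have hv₁ : v₁' = [] ∧ wq' = [] := by
            constructor
            · rcases List.append_eq_nil_iff.mp hv1.symm with ⟨h, _⟩; exact h
            · rcases List.append_eq_nil_iff.mp hv1.symm with ⟨_, h⟩; exact h
          exact ⟨⟨w, by rw [← hv₁.1]; exact hw1 ▸ hwp'⟩, hv₁.2 ▸ hwq'⟩
        · exact absurd (mem_rchars Q _ hwq' z (by rw [hr1]; simp)) (fun hh => disj hzP hh)
      obtain ⟨hzlP, hnilQ⟩ := hzlast
      have hfolP : ∀ a b, FStep P.matches' a b → FStep (P.comp Q).matches' a b := by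
        rintro a b ⟨u', v', huv'⟩
        exact ⟨u', v' ++ [], by
          have : (u' ++ a :: b :: v') ++ [] ∈ (P.comp Q).matches' :=
            Language.append_mem_mul huv' hnilQ
          rw [List.append_nil] at this ⊢; exact this⟩
      have hlastP : ∀ a, a ∈ LLast P.matches' → a ∈ LLast (P.comp Q).matches' := by
        rintro a ⟨w', hw'⟩
        exact ⟨w', by
          have : (w' ++ [a]) ++ [] ∈ (P.comp Q).matches' := Language.append_mem_mul hw' hnilQ
          rw [List.append_nil] at this; exact this⟩
      cases v₁ with
      | nil =>
        -- x last of wp : done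
        exact hlastP x ⟨u, hw ▸ hwp⟩
      | cons b v₂ =>
        have hb : b = y := by
          have := hv; simp only [List.cons_append] at this
          exact ((List.cons.injEq _ _ _ _ ▸ this).1).symm
        rw [hb] at hw
        have hyP : FStep P.matches' x y := ⟨u, v₂, hw ▸ hwp⟩
        have hnyzP : ¬ CReach P.matches' y z := fun h => hnyz (creach_mono hfolP h)
        have hxzP : CReach P.matches' x z := hPstay x z hxz hxP hzP
        have hzxP : CReach P.matches' z x := hPstay z x hzx hzP hxP
        exact hlastP x (ihP nP x z y hzlP hxzP hzxP hyP hnyzP)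
    · -- x inside wq
      have hxQ : x ∈ rchars Q := mem_rchars Q _ hwq x (by rw [hr]; simp)
      obtain ⟨hxzQ, hzQ⟩ := hQstay x z hxz hxQ
      have hzxQ : CReach Q.matches' z x := (hQstay z x hzx hzQ).1
      have hzlQ : z ∈ LLast Q.matches' := by
        obtain ⟨w, hw'⟩ := id hz
        obtain ⟨wp', hwp', wq', hwq', heq'⟩ := Language.mem_mul.mp hw'
        rcases split_single heq' with ⟨v₁', hw1, hv1⟩ | ⟨u₂', hu1, hr1⟩
        · exfalso
          have : z ∈ rchars P := mem_rchars P _ hwp' z (by rw [hw1]; simp)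
          exact disj this hzQ
        · exact ⟨u₂', hr1 ▸ hwq'⟩
      have hfolQ : ∀ a b, FStep Q.matches' a b → FStep (P.comp Q).matches' a b := by
        rintro a b ⟨u', v', huv'⟩
        exact ⟨wp₀ ++ u', v', by
          have : wp₀ ++ (u' ++ a :: b :: v') ∈ (P.comp Q).matches' :=
            Language.append_mem_mul hwp₀ huv'
          rw [List.append_assoc]; exact this⟩
      have hyQ : FStep Q.matches' x y := ⟨u₂, v, hr ▸ hwq⟩
      have hnyzQ : ¬ CReach Q.matches' y z := fun h => hnyz (creach_mono hfolQ h)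
      obtain ⟨w', hw'⟩ := ihQ nQ x z y hzlQ hxzQ hzxQ hyQ hnyzQ
      exact ⟨wp₀ ++ w', by
        have : wp₀ ++ (w' ++ [x]) ∈ (P.comp Q).matches' := Language.append_mem_mul hwp₀ hw'
        rw [List.append_assoc]; exact this⟩
  | star P ihP =>
    intro hN x z y hz _ _ hy hnyz
    have nP : (rchars P).Nodup := hN
    -- z ∈ LLast P
    have hzlP : z ∈ LLast P.matches' := by
      obtain ⟨w, hw⟩ := hz
      rcases Language.mem_kstar.mp hw with ⟨S, hflat, hS⟩
      obtain ⟨w', u₁, hwS, hw'⟩ := flatten_last hflat.symm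
      exact ⟨u₁, hw' ▸ hS w' hwS⟩
    -- analyze y
    obtain ⟨u, v, huv⟩ := hy
    rcases Language.mem_kstar.mp huv with ⟨S, hflat, hS⟩
    obtain ⟨SL, w₁, u₁, v₁, SR, hS1, hw1, hu1, hv1⟩ := flatten_split hflat.symm
    have hw₁P : w₁ ∈ P.matches' := hS w₁ (by rw [hS1]; simp)
    cases v₁ with
    | nil =>
      -- x ∈ LLast P : done
      have hxlP : x ∈ LLast P.matches' := ⟨u₁, by simpa using hw1 ▸ hw₁P⟩
      obtain ⟨w', hw'⟩ := hxlP
      exact ⟨w', star_single hw'⟩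
    | cons b v₂ =>
      exfalso
      have hb : b = y := by
        have := hv1; simp only [List.cons_append] at this
        exact ((List.cons.injEq _ _ _ _ ▸ this).1).symm
      rw [hb] at hw1
      -- build CReach M y z, contradiction
      apply hnyz
      -- within w₁ : y ⇝ ℓ
      have hw₁M : w₁ ∈ P.star.matches' := star_single hw₁P
      have h1 : CReach P.star.matches' y ((y :: v₂).getLast (by simp)) := by
        apply word_reach v₂ (u₁ ++ [x]) y []
        have : (u₁ ++ [x]) ++ y :: (v₂ ++ []) = w₁ := by rw [hw1]; simp
        rw [this]; exact hw₁M
      set ℓ := (y :: v₂).getLast (by simp) with hℓ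
      -- w₁ ends with ℓ
      have hdl : (y :: v₂).dropLast ++ [ℓ] = y :: v₂ := List.dropLast_append_getLast (by simp)
      have hw₁form : w₁ = (u₁ ++ x :: (y :: v₂).dropLast) ++ [ℓ] := by
        rw [hw1, ← hdl]; simp
      -- z's witness word in P
      obtain ⟨uz, huz⟩ := hzlP
      have hwzne : uz ++ [z] ≠ [] := by simp
      set h0 := (uz ++ [z]).head hwzne with hh0
      have hhead_tail : h0 :: (uz ++ [z]).tail = uz ++ [z] := List.cons_head_tail hwzne
      -- step ℓ → h0
      have h2 : FStep P.star.matches' ℓ h0 := by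
        refine ⟨u₁ ++ x :: (y :: v₂).dropLast, (uz ++ [z]).tail, ?_⟩
        have : (u₁ ++ x :: (y :: v₂).dropLast) ++ ℓ :: h0 :: (uz ++ [z]).tail
            = w₁ ++ (uz ++ [z]) := by
          rw [hw₁form, hhead_tail]; simp
        rw [this]
        exact star_double hw₁P huz
      -- h0 ⇝ z
      have h3 : CReach P.star.matches' h0 z := by
        have := word_reach (M := P.star.matches') (uz ++ [z]).tail [] h0 [] (by
          rw [List.append_nil, List.nil_append, hhead_tail]
          exact star_single huz)
        have hlast : ((h0 :: (uz ++ [z]).tail).getLast (by simp)) = z := by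
          rw [getLast_eq_of_eq hhead_tail]
          exact List.getLast_concat
        rwa [hlast] at this
      exact Relation.ReflTransGen.trans h1 (Relation.ReflTransGen.head h2 h3)




section KBDsec

variable {π γ : Type*} {M : Set (List π)} {f : π → List γ} {K : ℕ}

lemma step_at {pre rest : List π} {t : π} (h : pre ++ t :: rest ∈ M) :
    some t ∈ (glushkov M f).step pre.getLast? (f t) := by
  rcases eq_or_ne pre [] with rfl | hne
  · show some t ∈ {s | ∃ y, y ∈ LFirst M ∧ f y = f t ∧ s = some y}
    exact ⟨t, ⟨rest, by simpa using h⟩, rfl, rfl⟩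
  · have hdl : pre.dropLast ++ [pre.getLast hne] = pre := List.dropLast_append_getLast hne
    rw [List.getLast?_eq_getLast_of_ne_nil hne]
    show some t ∈ {s | ∃ y, y ∈ LFollow M (pre.getLast hne) ∧ f y = f t ∧ s = some y}
    refine ⟨t, ⟨pre.dropLast, rest, ?_⟩, rfl, rfl⟩
    have e : pre.dropLast ++ (pre.getLast hne) :: t :: rest
        = (pre.dropLast ++ [pre.getLast hne]) ++ t :: rest := by simp
    rw [e, hdl]
    exact h

lemma label_bounds (hk : kBD (glushkov M f) K) {s : Option π} {t : π}
    (h : some t ∈ (glushkov M f).step s (f t)) : 1 ≤ (f t).length ∧ (f t).length ≤ K :=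
  hk.2.1 s (f t) ⟨some t, h⟩

lemma nonpref (hk : kBD (glushkov M f) K) {s : Option π} {t₁ t₂ : π} {b₁ b₂ : List γ}
    (h1 : some t₁ ∈ (glushkov M f).step s b₁) (h2 : some t₂ ∈ (glushkov M f).step s b₂)
    (hne : t₁ ≠ t₂) : ¬ b₁ <+: b₂ :=
  hk.2.2 s b₁ b₂ _ _ h1 h2 (fun hpair => hne (by
    have := congrArg Prod.snd hpair
    simpa using this))

lemma flat_nil_iff (hk : kBD (glushkov M f) K) {pre l : List π} (h : pre ++ l ∈ M)
    (hf : (l.map f).flatten = []) : l = [] := by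
  cases l with
  | nil => rfl
  | cons t r =>
    exfalso
    have hstep := step_at (M := M) (f := f) h
    have hb := (label_bounds hk hstep).1
    simp only [List.map_cons, List.flatten_cons, List.append_eq_nil_iff] at hf
    rw [hf.1] at hb; simp at hb

lemma prefix_shrink {l C : List γ} {u : γ} (h : l <+: C ++ [u]) (hlen : l.length ≤ C.length) :
    l <+: C := by
  have h1 : l = (C ++ [u]).take l.length := List.prefix_iff_eq_take.mp h
  rw [List.take_append_of_le_length hlen] at h1
  rw [h1]; exact List.take_prefix _ _

lemma prefix_full {l C : List γ} {u : γ} (h : l <+: C ++ [u]) (hlen : C.length < l.length) :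
    l = C ++ [u] := by
  apply List.IsPrefix.eq_of_length h
  have := h.length_le
  simp only [List.length_append, List.length_singleton] at this ⊢
  omega

lemma run_prefix (hk : kBD (glushkov M f) K) :
    ∀ (ws₁ ws₂ pre : List π), pre ++ ws₁ ∈ M → pre ++ ws₂ ∈ M →
      (ws₁.map f).flatten <+: (ws₂.map f).flatten → ws₁ <+: ws₂ := by
  intro ws₁
  induction ws₁ with
  | nil => intro ws₂ pre _ _ _; exact List.nil_prefix
  | cons t₁ r₁ ih =>
    intro ws₂ pre h1 h2 hpre
    have hs1 := step_at (M := M) (f := f) h1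
    have hft₁ : (f t₁).length ≥ 1 := (label_bounds hk hs1).1
    cases ws₂ with
    | nil =>
      exfalso
      simp only [List.map_nil, List.flatten_nil, List.prefix_nil] at hpre
      simp only [List.map_cons, List.flatten_cons, List.append_eq_nil_iff] at hpre
      rw [hpre.1] at hft₁; simp at hft₁
    | cons t₂ r₂ =>
      have hs2 := step_at (M := M) (f := f) h2
      rcases eq_or_ne t₁ t₂ with rfl | hne
      · have htail : (r₁.map f).flatten <+: (r₂.map f).flatten := by
          simp only [List.map_cons, List.flatten_cons] at hpre
          exact (List.prefix_append_right_inj _).mp hpre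
        have h1' : (pre ++ [t₁]) ++ r₁ ∈ M := by simpa using h1
        have h2' : (pre ++ [t₁]) ++ r₂ ∈ M := by simpa using h2
        exact List.cons_prefix_cons.mpr ⟨rfl, ih r₂ (pre ++ [t₁]) h1' h2' htail⟩
      · exfalso
        have hp1 : f t₁ <+: ((t₂ :: r₂).map f).flatten :=
          List.IsPrefix.trans (by simp) hpre
        have hp2 : f t₂ <+: ((t₂ :: r₂).map f).flatten := by simp
        rcases List.prefix_or_prefix_of_prefix hp1 hp2 with h | h
        · exact nonpref hk hs1 hs2 hne h
        · exact nonpref hk hs2 hs1 (Ne.symm hne) h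

lemma run_div (hk : kBD (glushkov M f) K) :
    ∀ (ws₁ ws₂ pre : List π) (C : List γ) (u v : γ), u ≠ v →
      pre ++ ws₁ ∈ M → pre ++ ws₂ ∈ M →
      (ws₁.map f).flatten = C ++ [u] → (ws₂.map f).flatten = C ++ [v] →
      ∃ p y z, ws₁ = p ++ [y] ∧ ws₂ = p ++ [z] ∧
        f y = C.drop ((p.map f).flatten).length ++ [u] ∧
        f z = C.drop ((p.map f).flatten).length ++ [v] ∧
        ((p.map f).flatten).length ≤ C.length ∧
        C.length ≤ ((p.map f).flatten).length + (K - 1) := by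
  intro ws₁
  induction ws₁ with
  | nil =>
    intro ws₂ pre C u v _ _ _ hf1 _
    exfalso
    simp at hf1
  | cons t₁ r₁ ih =>
    intro ws₂ pre C u v huv h1 h2 hf1 hf2
    have hs1 := step_at (M := M) (f := f) h1
    have hb1 := label_bounds hk hs1
    cases ws₂ with
    | nil =>
      exfalso
      simp at hf2
    | cons t₂ r₂ =>
      have hs2 := step_at (M := M) (f := f) h2
      have hb2 := label_bounds hk hs2
      have hpf1 : f t₁ <+: C ++ [u] := by rw [← hf1]; simp
      have hpf2 : f t₂ <+: C ++ [v] := by rw [← hf2]; simp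
      rcases eq_or_ne t₁ t₂ with rfl | hne
      · -- equal heads; recurse
        have hlen : (f t₁).length ≤ C.length := by
          by_contra hlt
          push_neg at hlt
          have e1 := prefix_full hpf1 hlt
          have e2 := prefix_full hpf2 hlt
          rw [e1] at e2
          have := List.append_inj_right e2 rfl
          simp at this
          exact huv this
        have hr1 : (r₁.map f).flatten = C.drop (f t₁).length ++ [u] := by
          have : (f t₁ ++ (r₁.map f).flatten).drop (f t₁).length = (C ++ [u]).drop (f t₁).length := by
            rw [show f t₁ ++ (r₁.map f).flatten = ((t₁ :: r₁).map f).flatten by simp, hf1]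
          rw [List.drop_left] at this
          rw [this, List.drop_append_of_le_length hlen]
        have hr2 : (r₂.map f).flatten = C.drop (f t₁).length ++ [v] := by
          have : (f t₁ ++ (r₂.map f).flatten).drop (f t₁).length = (C ++ [v]).drop (f t₁).length := by
            rw [show f t₁ ++ (r₂.map f).flatten = ((t₁ :: r₂).map f).flatten by simp, hf2]
          rw [List.drop_left] at this
          rw [this, List.drop_append_of_le_length hlen]
        obtain ⟨p, y, z, e1, e2, e3, e4, e5, e6⟩ := ih r₂ (pre ++ [t₁]) (C.drop (f t₁).length) u v huv
          (by simpa using h1) (by simpa using h2) hr1 hr2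
        refine ⟨t₁ :: p, y, z, by simp [e1], by simp [e2], ?_, ?_, ?_, ?_⟩
        · rw [e3]; congr 1
          rw [List.drop_drop]
          congr 1
          simp [Nat.add_comm]
        · rw [e4]; congr 1
          rw [List.drop_drop]
          congr 1
          simp [Nat.add_comm]
        · simp only [List.map_cons, List.flatten_cons, List.length_append]
          rw [List.length_drop] at e5
          omega
        · simp only [List.map_cons, List.flatten_cons, List.length_append]
          rw [List.length_drop] at e6
          omega
      · -- distinct heads : both labels must be full
        have hcmp : ∀ {b₁ b₂ : List γ}, b₁ <+: C → b₂ <+: C ++ [v] → b₁ <+: b₂ ∨ b₂ <+: b₁ := by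
          intro b₁ b₂ hb hb'
          exact List.prefix_or_prefix_of_prefix (hb.trans (by simp)) hb'
        have hfull1 : f t₁ = C ++ [u] := by
          by_contra hne1
          have hlen1 : (f t₁).length ≤ C.length := by
            rcases le_or_gt (f t₁).length C.length with h | h
            · exact h
            · exact absurd (prefix_full hpf1 h) hne1
          have hsh1 : f t₁ <+: C := prefix_shrink hpf1 hlen1
          rcases hcmp hsh1 hpf2 with h | h
          · exact nonpref hk hs1 hs2 hne h
          · exact nonpref hk hs2 hs1 (Ne.symm hne) h
        have hfull2 : f t₂ = C ++ [v] := by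
          by_contra hne2
          have hlen2 : (f t₂).length ≤ C.length := by
            rcases le_or_gt (f t₂).length C.length with h | h
            · exact h
            · exact absurd (prefix_full hpf2 h) hne2
          have hsh2 : f t₂ <+: C := prefix_shrink hpf2 hlen2
          rcases List.prefix_or_prefix_of_prefix (hsh2.trans (C.prefix_append [u])) hpf1 with h | h
          · exact nonpref hk hs2 hs1 (Ne.symm hne) h
          · exact nonpref hk hs1 hs2 hne h
        have hr1nil : r₁ = [] := by
          apply flat_nil_iff hk (pre := pre ++ [t₁]) (by simpa using h1)
          have : f t₁ ++ (r₁.map f).flatten = C ++ [u] := by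
            rw [show f t₁ ++ (r₁.map f).flatten = ((t₁ :: r₁).map f).flatten by simp, hf1]
          rw [hfull1] at this
          simpa using this
        have hr2nil : r₂ = [] := by
          apply flat_nil_iff hk (pre := pre ++ [t₂]) (by simpa using h2)
          have : f t₂ ++ (r₂.map f).flatten = C ++ [v] := by
            rw [show f t₂ ++ (r₂.map f).flatten = ((t₂ :: r₂).map f).flatten by simp, hf2]
          rw [hfull2] at this
          simpa using this
        subst hr1nil; subst hr2nil
        refine ⟨[], t₁, t₂, rfl, rfl, by simpa using hfull1, by simpa using hfull2, by simp, ?_⟩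
        have := hb1.2
        rw [hfull1] at this
        simp only [List.length_append, List.length_singleton] at this
        simp only [List.map_nil, List.flatten_nil, List.length_nil]
        omega

end KBDsec


section Eval
open ABC Sum

variable {σ' : Type*}

lemma stepSet_single (A : NFA ABC σ') (s : σ') (x : ABC) :
    A.stepSet {s} x = A.step s x := by
  simp [NFA.stepSet]

lemma evalFrom_cons (A : NFA ABC σ') (S : Set σ') (x : ABC) (w : List ABC) :
    A.evalFrom S (x :: w) = A.evalFrom (A.stepSet S x) w := rfl

lemma evalFrom_single_cons (A : NFA ABC σ') (s : σ') (x : ABC) (w : List ABC) :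
    A.evalFrom {s} (x :: w) = A.evalFrom (A.step s x) w := by
  rw [evalFrom_cons, stepSet_single]

lemma evalFrom_app (A : NFA ABC σ') (S : Set σ') (w₁ w₂ : List ABC) :
    A.evalFrom S (w₁ ++ w₂) = A.evalFrom (A.evalFrom S w₁) w₂ := by
  simp [NFA.evalFrom, List.foldl_append]

lemma evalFrom_empty (A : NFA ABC σ') (w : List ABC) : A.evalFrom ∅ w = ∅ := by
  induction w with
  | nil => rfl
  | cons x w ih => rw [evalFrom_cons]; simp [NFA.stepSet]; exact ih

variable {k : ℕ}

lemma step_beta_a (hbk : k ≠ 0) : (A2 k).step (inl (false, k)) ABC.a = {inl (true, k)} := by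
  simp [A2]

lemma step_alpha_a : (A2 k).step (inl (true, k)) ABC.a = {inl (true, k)} := by
  simp [A2]

lemma step_b {bl : Bool} {j : ℕ} (h2 : 2 ≤ j) (hjk : j ≤ k) :
    (A2 k).step (inl (bl, j)) ABC.b = {inl (bl, j - 1)} := by
  cases bl <;> simp [A2, h2, hjk]

lemma step_b1 {bl : Bool} : (A2 k).step (inl (bl, 1)) ABC.b = {inr ()} := by
  cases bl <;> simp [A2]

lemma step_c1 : (A2 k).step (inl (true, 1)) ABC.c = {inl (false, k)} := by
  simp [A2]

lemma step_F (x : ABC) : (A2 k).step (inr ()) x = ∅ := by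
  cases x <;> simp [A2]

lemma run_b (bl : Bool) :
    ∀ (t j : ℕ), t < j → j ≤ k →
      (A2 k).evalFrom {inl (bl, j)} (List.replicate t ABC.b) = {inl (bl, j - t)} := by
  intro t
  induction t with
  | zero => intro j _ _; simp
  | succ t ih =>
    intro j ht hj
    rw [List.replicate_succ, evalFrom_single_cons, step_b (by omega) hj]
    rw [ih (j - 1) (by omega) (by omega)]
    have : j - 1 - t = j - (t + 1) := by omega
    rw [this]

lemma run_b_full (bl : Bool) (j : ℕ) (h1 : 1 ≤ j) (hjk : j ≤ k) :
    (A2 k).evalFrom {inl (bl, j)} (List.replicate j ABC.b) = {inr ()} := by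
  rcases eq_or_ne j 1 with rfl | hne
  · rw [show List.replicate 1 ABC.b = [ABC.b] from rfl, NFA.evalFrom_singleton,
      stepSet_single, step_b1]
  · have : List.replicate j ABC.b = List.replicate (j - 1) ABC.b ++ [ABC.b] := by
      rw [← List.replicate_succ']
      congr 1
      omega
    rw [this, evalFrom_app]
    rw [run_b bl (j-1) j (by omega) hjk]
    have : j - (j - 1) = 1 := by omega
    rw [this, NFA.evalFrom_singleton, stepSet_single, step_b1]

variable (k) in
def facW : List ABC := ABC.a :: (List.replicate (k - 1) ABC.b ++ [ABC.c])

variable (k) in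
def FwW (n : ℕ) : List ABC := (List.replicate n (facW k)).flatten

variable (k) in
def CwW (n : ℕ) : List ABC := FwW k n ++ ABC.a :: List.replicate (k - 1) ABC.b

lemma run_fac (hk2 : 2 ≤ k) :
    (A2 k).evalFrom {inl (false, k)} (facW k) = {inl (false, k)} := by
  rw [facW, evalFrom_single_cons, step_beta_a (by omega), evalFrom_app]
  rw [run_b true (k-1) k (by omega) le_rfl]
  have : k - (k - 1) = 1 := by omega
  rw [this, NFA.evalFrom_singleton, stepSet_single, step_c1]

lemma run_Fw (hk2 : 2 ≤ k) (n : ℕ) :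
    (A2 k).evalFrom {inl (false, k)} (FwW k n) = {inl (false, k)} := by
  induction n with
  | zero => simp [FwW]
  | succ n ih =>
    rw [FwW, List.replicate_succ, List.flatten_cons, evalFrom_app, run_fac hk2]
    exact ih

lemma run_Cw (hk2 : 2 ≤ k) (n : ℕ) :
    (A2 k).evalFrom {inl (false, k)} (CwW k n) = {inl (true, 1)} := by
  rw [CwW, evalFrom_app, run_Fw hk2, evalFrom_single_cons, step_beta_a (by omega)]
  rw [run_b true (k-1) k (by omega) le_rfl]
  have : k - (k - 1) = 1 := by omega
  rw [this]

lemma FwW_succ (n : ℕ) : FwW k (n + 1) = CwW k n ++ [ABC.c] := by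
  rw [FwW, List.replicate_succ', List.flatten_append]
  simp [CwW, FwW, facW]

lemma FwW_prefix {n m : ℕ} (h : n ≤ m) : FwW k n <+: FwW k m := by
  have e : FwW k m = FwW k n ++ (List.replicate (m - n) (facW k)).flatten := by
    rw [FwW, FwW, ← List.flatten_append, ← List.replicate_add]
    congr 2
    omega
  rw [e]
  exact ⟨_, rfl⟩

lemma mem_X (hk2 : 2 ≤ k) (n : ℕ) : CwW k n ++ [ABC.b] ∈ (A2 k).accepts := by
  rw [NFA.mem_accepts]
  refine ⟨inr (), by simp [A2], ?_⟩
  show _ ∈ (A2 k).evalFrom {inl (false, k)} _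
  rw [evalFrom_app, run_Cw hk2, NFA.evalFrom_singleton, stepSet_single, step_b1]
  rfl

lemma mem_Y (hk2 : 2 ≤ k) (n : ℕ) : CwW k n ++ [ABC.c] ∈ (A2 k).accepts := by
  rw [NFA.mem_accepts]
  refine ⟨inl (false, k), by simp [A2], ?_⟩
  show _ ∈ (A2 k).evalFrom {inl (false, k)} _
  rw [evalFrom_app, run_Cw hk2, NFA.evalFrom_singleton, stepSet_single, step_c1]
  rfl

lemma not_mem_ext (hk2 : 2 ≤ k) (n : ℕ) {g : List ABC} (hg : g ≠ []) :
    (CwW k n ++ [ABC.b]) ++ g ∉ (A2 k).accepts := by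
  rw [NFA.mem_accepts]
  rintro ⟨S, _, hS⟩
  have : (A2 k).evalFrom (A2 k).start ((CwW k n ++ [ABC.b]) ++ g) = ∅ := by
    show (A2 k).evalFrom {inl (false, k)} _ = ∅
    rw [evalFrom_app, evalFrom_app, run_Cw hk2, NFA.evalFrom_singleton, stepSet_single, step_b1]
    cases g with
    | nil => exact absurd rfl hg
    | cons x g' =>
      rw [evalFrom_single_cons, step_F, evalFrom_empty]
  rw [this] at hS
  exact hS

lemma not_mem_mid (hk2 : 2 ≤ k) (n : ℕ) {t : ℕ} (h1 : 1 ≤ t) (h2 : t ≤ k - 1) :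
    FwW k n ++ ABC.a :: List.replicate t ABC.b ∉ (A2 k).accepts := by
  rw [NFA.mem_accepts]
  rintro ⟨S, hacc, hS⟩
  have heval : (A2 k).evalFrom (A2 k).start (FwW k n ++ ABC.a :: List.replicate t ABC.b)
      = {inl (true, k - t)} := by
    show (A2 k).evalFrom {inl (false, k)} _ = _
    rw [evalFrom_app, run_Fw hk2, evalFrom_single_cons, step_beta_a (by omega)]
    exact run_b true t k (by omega) le_rfl
  rw [heval] at hS
  have hSval : S = inl (true, k - t) := hS
  rw [hSval] at hacc
  have : inl (true, k - t) ∈ ({inl (false, k), inl (true, k), inr ()} :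
      Set ((Bool × ℕ) ⊕ Unit)) := hacc
  simp only [Set.mem_insert_iff, Set.mem_singleton_iff] at this
  rcases this with h | h | h
  · simp at h
  · simp at h
    omega
  · simp at h

end Eval


/-- For every `k ≥ 2`, the language recognized by `A_k` is not `(k-1)`-block
deterministic. -/
theorem stmt2 : ∀ k : ℕ, 2 ≤ k → ¬ IsKBlockDet ((A2 k).accepts : Set (List ABC)) (k - 1) := by
  intro k hk2 hbd
  obtain ⟨π, E, f, hnodup, hkbd, hL⟩ := hbd
  classical
  have hLiff : ∀ w, w ∈ (A2 k).accepts ↔ ∃ ws ∈ E.matches', (ws.map f).flatten = w :=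
    fun w => Set.ext_iff.mp hL w
  -- length facts
  have hlenfac : (facW k).length = k + 1 := by
    simp [facW]; omega
  have hlenFw : ∀ n, (FwW k n).length = n * (k + 1) := by
    intro n
    induction n with
    | zero => simp [FwW]
    | succ n ih =>
      rw [FwW, List.replicate_succ, List.flatten_cons]
      simp only [List.length_append]
      rw [show (List.replicate n (facW k)).flatten = FwW k n from rfl, ih, hlenfac]
      ring
  have hlenCw : ∀ n, (CwW k n).length = n * (k + 1) + k := by
    intro n
    simp [CwW, hlenFw n]; omega
  -- marked words for X and Y families
  have hXex : ∀ n, ∃ ws ∈ E.matches', (ws.map f).flatten = CwW k n ++ [ABC.b] :=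
    fun n => (hLiff _).mp (mem_X hk2 n)
  have hYex : ∀ n, ∃ ws ∈ E.matches', (ws.map f).flatten = CwW k n ++ [ABC.c] :=
    fun n => (hLiff _).mp (mem_Y hk2 n)
  choose wsX hwsX hfXc using hXex
  choose wsY hwsY hfYc using hYex
  -- divergence analysis per n
  have hdiv : ∀ n : ℕ, ∃ p y z, wsX n = p ++ [y] ∧ wsY n = p ++ [z] ∧
      f y = (CwW k n).drop ((p.map f).flatten).length ++ [ABC.b] ∧
      f z = (CwW k n).drop ((p.map f).flatten).length ++ [ABC.c] ∧
      ((p.map f).flatten).length ≤ (CwW k n).length ∧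
      (CwW k n).length ≤ ((p.map f).flatten).length + (k - 1 - 1) ∧ p ≠ [] := by
    intro n
    obtain ⟨p, y, z, e1, e2, e3, e4, e5, e6⟩ :=
      run_div hkbd (wsX n) (wsY n) [] (CwW k n) ABC.b ABC.c (by decide)
        (by rw [List.nil_append]; exact hwsX n) (by rw [List.nil_append]; exact hwsY n) (hfXc n) (hfYc n)
    refine ⟨p, y, z, e1, e2, e3, e4, e5, e6, ?_⟩
    intro hp
    subst hp
    simp only [List.map_nil, List.flatten_nil, List.length_nil, Nat.zero_add] at e6
    rw [hlenCw n] at e6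
    omega
  choose P Y Z h1 h2 h3 h4 h5 h6 hPne using hdiv
  -- bounds on the boundary position
  have hlo : ∀ n, n * (k + 1) + 2 ≤ (((P n).map f).flatten).length := by
    intro n
    have := h6 n
    rw [hlenCw n] at this
    omega
  have hhi : ∀ n, (((P n).map f).flatten).length ≤ n * (k + 1) + k := by
    intro n
    have := h5 n
    rw [hlenCw n] at this
    omega
  -- C structure
  have hCsplit : ∀ n, CwW k n = (FwW k n ++ [ABC.a]) ++ List.replicate (k - 1) ABC.b := by
    intro n; simp [CwW]
  have htake : ∀ n, (CwW k n).take ((((P n).map f).flatten).length) =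
      FwW k n ++ ABC.a :: List.replicate ((((P n).map f).flatten).length - (n * (k + 1) + 1)) ABC.b := by
    intro n
    rw [hCsplit n]
    have hsz : (FwW k n ++ [ABC.a]).length = n * (k + 1) + 1 := by simp [hlenFw n]
    have e : (((P n).map f).flatten).length = (FwW k n ++ [ABC.a]).length +
        ((((P n).map f).flatten).length - (n * (k + 1) + 1)) := by
      rw [hsz]
      have := hlo n
      omega
    conv_lhs => rw [e]
    rw [List.take_length_add_append, List.take_replicate]
    have hmin : min ((((P n).map f).flatten).length - (n * (k + 1) + 1)) (k - 1)
        = (((P n).map f).flatten).length - (n * (k + 1) + 1) := by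
      have := hhi n
      omega
    rw [hmin]
    simp
  have hdrop : ∀ n, (CwW k n).drop ((((P n).map f).flatten).length) =
      List.replicate (n * (k + 1) + k - (((P n).map f).flatten).length) ABC.b := by
    intro n
    rw [hCsplit n]
    have hsz : (FwW k n ++ [ABC.a]).length = n * (k + 1) + 1 := by simp [hlenFw n]
    have e : (((P n).map f).flatten).length = (FwW k n ++ [ABC.a]).length +
        ((((P n).map f).flatten).length - (n * (k + 1) + 1)) := by
      rw [hsz]; have := hlo n; omega
    conv_lhs => rw [e]
    rw [List.drop_length_add_append, List.drop_replicate]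
    congr 1
    have := hlo n; have := hhi n
    omega
  have hfYlab : ∀ n, f (Y n) =
      List.replicate (n * (k + 1) + k - (((P n).map f).flatten).length) ABC.b ++ [ABC.b] := by
    intro n; rw [h3 n, hdrop n]
  have hfZlab : ∀ n, f (Z n) =
      List.replicate (n * (k + 1) + k - (((P n).map f).flatten).length) ABC.b ++ [ABC.c] := by
    intro n; rw [h4 n, hdrop n]
  -- flat of P n
  have hcancel : ∀ n, ((P n).map f).flatten ++
      (CwW k n).drop ((((P n).map f).flatten).length) = CwW k n := by
    intro n
    have e : (((P n).map f).flatten ++ (CwW k n).drop ((((P n).map f).flatten).length)) ++ [ABC.b]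
        = CwW k n ++ [ABC.b] := by
      rw [List.append_assoc, ← h3 n]
      rw [show ((P n).map f).flatten ++ f (Y n) = (((P n ++ [Y n])).map f).flatten by simp]
      rw [← h1 n]
      exact hfXc n
    exact List.append_cancel_right e
  have htakeP : ∀ n, (CwW k n).take ((((P n).map f).flatten).length) = ((P n).map f).flatten := by
    intro n
    rw [← hcancel n, List.take_left]
  -- the pivot positions
  set xO : ℕ → π := fun j => (P j).getLast (hPne j) with hxO
  have hxchars : ∀ n, xO n ∈ rchars E := by
    intro n
    apply mem_rchars E (wsX n) (hwsX n)
    rw [h1 n]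
    exact List.mem_append.mpr (Or.inl (List.getLast_mem _))
  -- pigeonhole
  obtain ⟨n, m, hnm, hx⟩ : ∃ n m : ℕ, n < m ∧ xO n = xO m := by
    have hcard : Fintype.card {a // a ∈ (rchars E).toFinset} <
        Fintype.card (Fin ((rchars E).length + 1)) := by
      rw [Fintype.card_coe, Fintype.card_fin]
      have := List.toFinset_card_le (rchars E)
      omega
    obtain ⟨i, j, hij, hgij⟩ := Fintype.exists_ne_map_eq_of_card_lt
      (fun i : Fin ((rchars E).length + 1) =>
        (⟨xO i.val, List.mem_toFinset.mpr (hxchars i.val)⟩ : {a // a ∈ (rchars E).toFinset}))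
      hcard
    have hxeq : xO i.val = xO j.val := congrArg Subtype.val hgij
    rcases lt_trichotomy i.val j.val with h | h | h
    · exact ⟨i.val, j.val, h, hxeq⟩
    · exact absurd (Fin.ext h) hij
    · exact ⟨j.val, i.val, h, hxeq.symm⟩
  -- basic decompositions
  have hwsXd : ∀ j, (P j).dropLast ++ xO j :: Y j :: [] ∈ E.matches' := by
    intro j
    have e1 : (P j).dropLast ++ xO j :: Y j :: [] = ((P j).dropLast ++ [xO j]) ++ [Y j] := by simp
    rw [e1, hxO]
    rw [List.dropLast_append_getLast (hPne j), ← h1 j]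
    exact hwsX j
  have hwsYd : ∀ j, (P j).dropLast ++ xO j :: Z j :: [] ∈ E.matches' := by
    intro j
    have e1 : (P j).dropLast ++ xO j :: Z j :: [] = ((P j).dropLast ++ [xO j]) ++ [Z j] := by simp
    rw [e1, hxO]
    rw [List.dropLast_append_getLast (hPne j), ← h2 j]
    exact hwsY j
  -- hypothesis (i) : z ∈ LLast
  have hzLast : Z n ∈ LLast E.matches' := ⟨P n, by rw [← h2 n]; exact hwsY n⟩
  -- hypothesis (ii) : y ∈ Follow x
  have hyF : Y n ∈ LFollow E.matches' (xO n) := ⟨(P n).dropLast, [], hwsXd n⟩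
  -- hypothesis (iii) : x ⇝ z
  have hxz : CReach E.matches' (xO n) (Z n) :=
    Relation.ReflTransGen.single ⟨(P n).dropLast, [], hwsYd n⟩
  -- hypothesis (iv) : z ⇝ x
  have hzx : CReach E.matches' (Z n) (xO n) := by
    have hflY : ∀ j, ((wsY j).map f).flatten = FwW k (j + 1) := by
      intro j; rw [hfYc j, ← FwW_succ]
    obtain ⟨ρ, hρ⟩ : wsY n <+: wsY m := by
      apply run_prefix hkbd (wsY n) (wsY m) [] (by rw [List.nil_append]; exact hwsY n) (by rw [List.nil_append]; exact hwsY m)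
      rw [hflY n, hflY m]
      exact FwW_prefix (by omega)
    have hρne : ρ ≠ [] := by
      intro hemp
      subst hemp
      rw [List.append_nil] at hρ
      have := congrArg (fun l => ((List.map f l).flatten).length) hρ
      rw [hflY n, hflY m, hlenFw (n+1), hlenFw (m+1)] at this
      have := Nat.eq_of_mul_eq_mul_right (show 0 < k + 1 by omega) this
      omega
    have hρd : ρ.dropLast ++ [ρ.getLast hρne] = ρ := List.dropLast_append_getLast hρne
    have he : (P n ++ Z n :: ρ.dropLast) ++ [ρ.getLast hρne] = P m ++ [Z m] := by
      rw [show (P n ++ Z n :: ρ.dropLast) ++ [ρ.getLast hρne]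
          = (P n ++ [Z n]) ++ (ρ.dropLast ++ [ρ.getLast hρne]) by simp, hρd, ← h2 n, hρ]
      exact h2 m
    have hlen' : (P n ++ Z n :: ρ.dropLast).length = (P m).length := by
      have h' := congrArg List.length he
      simp only [List.length_append, List.length_cons, List.length_nil] at h' ⊢
      omega
    obtain ⟨e1, e2⟩ := List.append_inj he hlen'
    have hZm : Z m = ρ.getLast hρne := by
      have h' : [ρ.getLast hρne] = [Z m] := e2
      exact (by simpa using h' : ρ.getLast hρne = Z m).symm
    have hreach := word_reach (M := E.matches') ρ.dropLast (P n) (Z n) [Z m] (by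
      rw [show P n ++ Z n :: (ρ.dropLast ++ [Z m]) = (P n ++ [Z n]) ++ (ρ.dropLast ++ [Z m]) by
        simp]
      rw [show ρ.dropLast ++ [Z m] = ρ from by rw [hZm]; exact hρd]
      rw [← h2 n, hρ]
      exact hwsY m)
    have hgl : (Z n :: ρ.dropLast).getLast (by simp) = xO n := by
      rw [hx]
      have e3 : (P m).getLast (hPne m) = (P n ++ Z n :: ρ.dropLast).getLast (by simp) :=
        getLast_eq_of_eq e1.symm
      have e4 : (P n ++ Z n :: ρ.dropLast).getLast (by simp)
          = (Z n :: ρ.dropLast).getLast (by simp) :=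
        List.getLast_append_of_ne_nil _ (by simp)
      exact (e3.trans e4).symm
    rwa [hgl] at hreach
  -- hypothesis (v) : y ≠ z and ¬ y ⇝ z
  have hynez : Y n ≠ Z n := by
    intro heq
    have hfeq : f (Y n) = f (Z n) := by rw [heq]
    rw [hfYlab n, hfZlab n] at hfeq
    have := List.append_cancel_left hfeq
    simp at this
  have hwsXne : wsX n ≠ [] := by rw [h1 n]; simp
  have hny : ¬ CReach E.matches' (Y n) (Z n) := by
    intro hr
    rcases Relation.ReflTransGen.cases_head hr with heq | ⟨w0, hstep0, hrest⟩
    · exact hynez heq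
    · obtain ⟨l, hchain, hlast⟩ := creach_chain hrest
      have hL0ne : wsX n ++ w0 :: l ≠ [] := by simp
      have hhead : (wsX n ++ w0 :: l).head hL0ne ∈ LFirst E.matches' := by
        rw [List.head_append_left hwsXne]
        refine ⟨(wsX n).tail, ?_⟩
        rw [List.cons_head_tail hwsXne]
        exact hwsX n
      have hch : (wsX n ++ w0 :: l).Chain' (FStep E.matches') := by
        apply List.isChain_append.mpr
        refine ⟨mword_chain' (wsX n) [] (by rw [List.nil_append]; exact hwsX n), hchain, ?_⟩
        intro p hp q hq
        have hq' : q = w0 := by simp at hq; exact hq.symm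
        have hp' : p = Y n := by
          rw [List.getLast?_eq_getLast_of_ne_nil hwsXne] at hp
          have hpv : p = (wsX n).getLast hwsXne := (by simpa using hp :
            (wsX n).getLast hwsXne = p).symm
          rw [hpv, getLast_eq_of_eq (h1 n)]
          exact List.getLast_concat
        rw [hp', hq']
        exact hstep0
      have hlst : (wsX n ++ w0 :: l).getLast hL0ne ∈ LLast E.matches' := by
        rw [List.getLast_append_of_ne_nil _ (by simp : (w0 :: l) ≠ [])]
        have : (w0 :: l).getLast (by simp) = Z n := hlast
        rw [this]
        exact hzLast
      have hmem := locality E hnodup _ hL0ne hhead hch hlst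
      have hacc : (((wsX n ++ w0 :: l).map f).flatten) ∈ (A2 k).accepts :=
        (hLiff _).mpr ⟨_, hmem, rfl⟩
      have hflat0 : ((wsX n ++ w0 :: l).map f).flatten
          = (CwW k n ++ [ABC.b]) ++ ((w0 :: l).map f).flatten := by
        rw [List.map_append, List.flatten_append, hfXc n]
      have hw0lab : 1 ≤ (f w0).length := by
        have hstepG : some w0 ∈ (glushkov E.matches' f).step (some (Y n)) (f w0) :=
          ⟨w0, hstep0, rfl, rfl⟩
        exact (hkbd.2.1 _ _ ⟨some w0, hstepG⟩).1
      have hgne : ((w0 :: l).map f).flatten ≠ [] := by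
        simp only [List.map_cons, List.flatten_cons]
        intro hgg
        rcases List.append_eq_nil_iff.mp hgg with ⟨hh, _⟩
        rw [hh] at hw0lab
        simp at hw0lab
      rw [hflat0] at hacc
      exact not_mem_ext hk2 n hgne hacc
  -- main structural lemma
  have hxlast : xO n ∈ LLast E.matches' :=
    star_lem E hnodup (xO n) (Z n) (Y n) hzLast hxz hzx hyF hny
  -- final contradiction
  have hPchain : (P n).Chain' (FStep E.matches') :=
    (mword_chain' (wsX n) [] (by rw [List.nil_append]; exact hwsX n)).prefix ⟨[Y n], (h1 n).symm⟩
  have hPhead : (P n).head (hPne n) ∈ LFirst E.matches' := by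
    refine ⟨(P n).tail ++ [Y n], ?_⟩
    rw [show (P n).head (hPne n) :: ((P n).tail ++ [Y n])
        = ((P n).head (hPne n) :: (P n).tail) ++ [Y n] by rw [List.cons_append]]
    rw [List.cons_head_tail (hPne n), ← h1 n]
    exact hwsX n
  have hPmem := locality E hnodup (P n) (hPne n) hPhead hPchain hxlast
  have hPacc : ((P n).map f).flatten ∈ (A2 k).accepts := (hLiff _).mpr ⟨P n, hPmem, rfl⟩
  have hPacc' : (CwW k n).take ((((P n).map f).flatten).length) ∈ (A2 k).accepts := by
    rw [htakeP n]; exact hPacc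
  rw [htake n] at hPacc'
  exact not_mem_mid hk2 n (by have := hlo n; omega) (by have := hhi n; omega) hPacc'



end BD
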